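/- Let F(x) = 1/(1 + e^{−x}) be the standard logistic cumulative distribution function, let −∞ < a < b < ∞, and let F_a^b denote the standard logistic distribution truncated to [a, b], i.e. F_a^b(x) = 0 for x < a, F_a^b(x) = (F(x) − F(a))/(F(b) − F(a)) for a ≤ x ≤ b, and F_a^b(x) = 1 for x > b. Then for every threshold τ with a ≤ τ ≤ b and every observation y with a ≤ y ≤ b, writing v = max(y, τ): twCRPS_τ(F_a^b, y) = (1/(F(b) − F(a))²) · ( F(τ) − F(b) + F(a)² log(F(v)/F(τ)) + (1 − F(a))² log((1 − F(τ))/(1 − F(v))) + F(b)² log(F(b)/F(v)) + (1 − F(b))² log((1 − F(v))/(1 − F(b))) ). -/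

import Mathlib

/-!
Beyond `b` the truncated CDF equals `1`, so only `[τ, b]` contributes to the integral. On it,
with `v = max y τ`, the integrand is `((F - F a) / (F b - F a))²` on `(τ, v)` and
`((F - F b) / (F b - F a))²` on `(v, b)`. Since the logistic CDF satisfies `F' = F (1 - F)`,
each `(F - c)²` has the elementary primitive `c² log F - (1 - c)² log (1 - F) - F`, and the
closed form is the resulting difference of primitives.
-/

open MeasureTheory Set

/-- Threshold-weighted CRPS: `twCRPS_τ(F, y) = ∫_τ^∞ (F(z) − 𝟙{z ≥ y})² dz`. -/
noncomputable def twCRPS (F : ℝ → ℝ) (τ y : ℝ) : ℝ :=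
  ∫ z in Set.Ioi τ, (F z - if y ≤ z then (1 : ℝ) else 0) ^ 2

/-- Standard logistic CDF `F(x) = 1/(1 + e^{−x})`. -/
noncomputable def logisticCDF (x : ℝ) : ℝ := 1 / (1 + Real.exp (-x))

/-- CDF of the standard logistic distribution truncated to `[a, b]`. -/
noncomputable def truncLogisticCDF (a b : ℝ) (x : ℝ) : ℝ :=
  if x < a then 0
  else if x ≤ b then (logisticCDF x - logisticCDF a) / (logisticCDF b - logisticCDF a)
  else 1

lemma logisticCDF_pos (x : ℝ) : 0 < logisticCDF x := by
  unfold logisticCDF; positivity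

lemma logisticCDF_lt_one (x : ℝ) : logisticCDF x < 1 := by
  unfold logisticCDF
  rw [div_lt_one (by positivity)]
  linarith [Real.exp_pos (-x)]

lemma logisticCDF_strictMono : StrictMono logisticCDF := by
  intro x y hxy
  unfold logisticCDF
  have : Real.exp (-y) < Real.exp (-x) := Real.exp_lt_exp.2 (by linarith)
  rw [div_lt_div_iff₀ (by positivity) (by positivity)]
  linarith

lemma continuous_logisticCDF : Continuous logisticCDF := by
  unfold logisticCDF
  exact continuous_const.div (by fun_prop) fun x => by positivity

lemma hasDerivAt_logisticCDF (x : ℝ) :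
    HasDerivAt logisticCDF (logisticCDF x * (1 - logisticCDF x)) x := by
  have hden : HasDerivAt (fun x : ℝ => 1 + Real.exp (-x)) (-Real.exp (-x)) x := by
    simpa using ((Real.hasDerivAt_exp (-x)).comp x (hasDerivAt_neg x)).const_add 1
  have hinv := hden.inv (by positivity)
  rw [show logisticCDF = fun x : ℝ => (1 + Real.exp (-x))⁻¹ by funext; simp [logisticCDF]]
  refine hinv.congr_deriv ?_
  field_simp [logisticCDF]
  ring

noncomputable def logisticSqPrimitive (c z : ℝ) : ℝ :=
  c ^ 2 * Real.log (logisticCDF z) - (1 - c) ^ 2 * Real.log (1 - logisticCDF z) - logisticCDF z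

lemma hasDerivAt_logisticSqPrimitive (c x : ℝ) :
    HasDerivAt (logisticSqPrimitive c) ((logisticCDF x - c) ^ 2) x := by
  have hF := hasDerivAt_logisticCDF x
  have hF0 : logisticCDF x ≠ 0 := (logisticCDF_pos x).ne'
  have hF1 : 1 - logisticCDF x ≠ 0 := (sub_pos.2 (logisticCDF_lt_one x)).ne'
  have h := (((hF.log hF0).const_mul (c ^ 2)).sub
    ((((hasDerivAt_const x 1).sub hF).log hF1).const_mul ((1 - c) ^ 2))).sub hF
  refine h.congr_deriv ?_
  simp only [Pi.sub_apply]
  field_simp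
  ring

lemma integral_logisticCDF_sub_sq (c s t : ℝ) :
    ∫ z in s..t, (logisticCDF z - c) ^ 2 = logisticSqPrimitive c t - logisticSqPrimitive c s :=
  intervalIntegral.integral_eq_sub_of_hasDerivAt (fun z _ => hasDerivAt_logisticSqPrimitive c z)
    (((continuous_logisticCDF.sub continuous_const).pow 2).intervalIntegrable s t)

theorem twCRPS_eq_of_eq_one_of_lt {F : ℝ → ℝ} {τ y b : ℝ} (hτb : τ ≤ b) (hyb : y ≤ b)
    (hF : ContinuousOn F (Icc τ b)) (hF_one : ∀ z, b < z → F z = 1) :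
    twCRPS F τ y = (∫ z in τ..max y τ, F z ^ 2) + ∫ z in max y τ..b, (F z - 1) ^ 2 := by
  set v := max y τ
  set f : ℝ → ℝ := fun z => (F z - if y ≤ z then (1 : ℝ) else 0) ^ 2
  have hτv : τ ≤ v := le_max_right y τ
  have hvb : v ≤ b := max_le hyb hτb
  have h_below : EqOn f (fun z => F z ^ 2) (uIoo τ v) := by
    intro z hz
    rw [uIoo_of_le hτv] at hz
    have hzy : ¬ y ≤ z := fun h => (max_le h hz.1.le).not_gt hz.2
    simp [f, hzy]
  have h_above : EqOn f (fun z => (F z - 1) ^ 2) (uIoo v b) := by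
    intro z hz
    rw [uIoo_of_le hvb] at hz
    simp [f, (le_max_left y τ).trans hz.1.le]
  have h_beyond : EqOn f 0 (Ioi b) := by
    intro z hz
    simp [f, hF_one z hz, hyb.trans (le_of_lt hz)]
  have hint_below : IntervalIntegrable f volume τ v := by
    refine (ContinuousOn.intervalIntegrable ?_).congr_uIoo h_below.symm
    rw [uIcc_of_le hτv]
    exact (hF.mono (Icc_subset_Icc_right hvb)).pow 2
  have hint_above : IntervalIntegrable f volume v b := by
    refine (ContinuousOn.intervalIntegrable ?_).congr_uIoo h_above.symm
    rw [uIcc_of_le hvb]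
    exact ((hF.mono (Icc_subset_Icc_left hτv)).sub continuousOn_const).pow 2
  rw [twCRPS, ← intervalIntegral.integral_interval_add_Ioi' (hint_below.trans hint_above)
      (integrableOn_zero.congr_fun h_beyond.symm measurableSet_Ioi),
    setIntegral_congr_fun measurableSet_Ioi h_beyond,
    ← intervalIntegral.integral_add_adjacent_intervals hint_below hint_above,
    intervalIntegral.integral_congr_uIoo h_below, intervalIntegral.integral_congr_uIoo h_above]
  simp

section truncLogistic

variable {a b : ℝ}

lemma truncLogisticCDF_of_mem_Icc {z : ℝ} (hz : z ∈ Icc a b) :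
    truncLogisticCDF a b z =
      (logisticCDF z - logisticCDF a) / (logisticCDF b - logisticCDF a) := by
  simp [truncLogisticCDF, hz.1, hz.2]

lemma truncLogisticCDF_of_lt (hab : a ≤ b) {z : ℝ} (hz : b < z) :
    truncLogisticCDF a b z = 1 := by
  simp [truncLogisticCDF, (hab.trans hz.le).not_gt, hz]

lemma continuousOn_truncLogisticCDF : ContinuousOn (truncLogisticCDF a b) (Icc a b) :=
  ((continuous_logisticCDF.sub continuous_const).div_const _).continuousOn.congr
    fun _ hz => truncLogisticCDF_of_mem_Icc hz

lemma integral_truncLogisticCDF_sub_sq (hab : a < b) (d : ℝ) {s t : ℝ}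
    (hs : s ∈ Icc a b) (ht : t ∈ Icc a b) :
    ∫ z in s..t, (truncLogisticCDF a b z - d) ^ 2 =
      (logisticSqPrimitive (logisticCDF a + d * (logisticCDF b - logisticCDF a)) t -
        logisticSqPrimitive (logisticCDF a + d * (logisticCDF b - logisticCDF a)) s) /
        (logisticCDF b - logisticCDF a) ^ 2 := by
  have hD : logisticCDF b - logisticCDF a ≠ 0 := (sub_pos.2 (logisticCDF_strictMono hab)).ne'
  rw [← integral_logisticCDF_sub_sq, ← intervalIntegral.integral_div]
  refine intervalIntegral.integral_congr fun z hz => ?_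
  rw [truncLogisticCDF_of_mem_Icc (uIcc_subset_Icc hs ht hz)]
  field_simp
  ring

end truncLogistic

theorem twCRPS_truncLogistic (a b : ℝ) (hab : a < b)
    (τ y : ℝ) (hτa : a ≤ τ) (hτb : τ ≤ b) (hya : a ≤ y) (hyb : y ≤ b) :
    twCRPS (truncLogisticCDF a b) τ y =
      (1 / (logisticCDF b - logisticCDF a) ^ 2) *
        (logisticCDF τ - logisticCDF b
          + (logisticCDF a) ^ 2 * Real.log (logisticCDF (max y τ) / logisticCDF τ)
          + (1 - logisticCDF a) ^ 2 *
              Real.log ((1 - logisticCDF τ) / (1 - logisticCDF (max y τ)))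
          + (logisticCDF b) ^ 2 * Real.log (logisticCDF b / logisticCDF (max y τ))
          + (1 - logisticCDF b) ^ 2 *
              Real.log ((1 - logisticCDF (max y τ)) / (1 - logisticCDF b))) := by
  have hv : max y τ ∈ Icc a b := ⟨hya.trans (le_max_left y τ), max_le hyb hτb⟩
  have h_below := integral_truncLogisticCDF_sub_sq hab 0 ⟨hτa, hτb⟩ hv
  have h_above := integral_truncLogisticCDF_sub_sq hab 1 hv ⟨hab.le, le_rfl⟩
  simp only [sub_zero, zero_mul, add_zero, one_mul, add_sub_cancel] at h_below h_above
  rw [twCRPS_eq_of_eq_one_of_lt hτb hyb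
    (continuousOn_truncLogisticCDF.mono (Icc_subset_Icc_left hτa))
    (fun z hz => truncLogisticCDF_of_lt hab.le hz), h_below, h_above]
  have hD : logisticCDF b - logisticCDF a ≠ 0 := (sub_pos.2 (logisticCDF_strictMono hab)).ne'
  have hF_ne_zero (x : ℝ) : logisticCDF x ≠ 0 := (logisticCDF_pos x).ne'
  have hF_ne_one (x : ℝ) : 1 - logisticCDF x ≠ 0 := (sub_pos.2 (logisticCDF_lt_one x)).ne'
  simp only [Real.log_div, hF_ne_zero, hF_ne_one, ne_eq, not_false_eq_true, logisticSqPrimitive]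
  field_simp
  ring
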